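/- arXiv:2311.12384 — 7 statements merged into one kernel-verified Lean document; each statement's English description precedes it below -/
import Mathlib

section
/- Let (H, G, φ, R) be a relative Rota-Baxter group. Then the operation h₁ ∘ h₂ = h₁ · φ_{R(h₁)}(h₂) defines a group structure on the underlying set of H. -/
/-!
The Rota-Baxter identity says exactly that `R` turns the descendent product
`a ∘ b = a * φ (R a) b` into the product of `G`. Associativity follows by expanding `φ` of a
product, `1` is neutral because `R 1 = 1`, and `b = (φ (R a))⁻¹ a⁻¹` is a right inverse of `a`.
Applying `R` to `a ∘ b = 1` gives `R b = (R a)⁻¹`, which makes `b` a left inverse as well.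
-/

section

variable {H G : Type*} [Group H] [Group G]

def IsRelRotaBaxter (φ : G →* MulAut H) (R : H → G) : Prop :=
  ∀ h₁ h₂ : H, R h₁ * R h₂ = R (h₁ * φ (R h₁) h₂)

namespace IsRelRotaBaxter

variable {φ : G →* MulAut H} {R : H → G}

theorem map_one (hR : IsRelRotaBaxter φ R) : R 1 = 1 := by
  simpa using hR 1 1

theorem descendent_assoc (hR : IsRelRotaBaxter φ R) (a b c : H) :
    (a * φ (R a) b) * φ (R (a * φ (R a) b)) c = a * φ (R a) (b * φ (R b) c) := by
  rw [← hR a b, map_mul, MulAut.mul_apply, map_mul, mul_assoc]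

theorem map_descendent_inv (hR : IsRelRotaBaxter φ R) (a : H) :
    R ((φ (R a))⁻¹ a⁻¹) = (R a)⁻¹ := by
  refine eq_inv_of_mul_eq_one_right ?_
  rw [hR, MulAut.apply_inv_self, mul_inv_cancel, hR.map_one]

theorem descendent_inv_mul (hR : IsRelRotaBaxter φ R) (a : H) :
    (φ (R a))⁻¹ a⁻¹ * φ (R ((φ (R a))⁻¹ a⁻¹)) a = 1 := by
  rw [hR.map_descendent_inv, map_inv φ, ← map_mul, inv_mul_cancel, MulEquiv.map_one]

end IsRelRotaBaxter

end

/-- For a relative Rota-Baxter group `(H, G, φ, R)`, the operation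
`h₁ ∘ h₂ = h₁ * φ_{R h₁} h₂` is a group operation on `H` (associative, with `1` as
two-sided identity, and two-sided inverses). -/
theorem descendent_group_structure {H G : Type*} [Group H] [Group G]
    (φ : G →* MulAut H) (R : H → G)
    (hR : ∀ h₁ h₂ : H, R h₁ * R h₂ = R (h₁ * φ (R h₁) h₂)) :
    (∀ a b c : H,
      (a * φ (R a) b) * φ (R (a * φ (R a) b)) c = a * φ (R a) (b * φ (R b) c)) ∧
    (∀ a : H, 1 * φ (R 1) a = a ∧ a * φ (R a) 1 = a) ∧
    (∀ a : H, ∃ b : H, a * φ (R a) b = 1 ∧ b * φ (R b) a = 1) := by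
  have hRB : IsRelRotaBaxter φ R := hR
  refine ⟨hRB.descendent_assoc, fun a => ⟨?_, by simp⟩, fun a => ?_⟩
  · simp [hRB.map_one]
  · exact ⟨(φ (R a))⁻¹ a⁻¹, by simp, hRB.descendent_inv_mul a⟩
end

section
/- Let (H, G, φ, R) be a relative Rota-Baxter group and (K, L, φ|, R|) an ideal of it (so K ⊴ H, L ⊴ G, φ_g(K) ⊆ K for all g ∈ G, φ_ℓ(h)h⁻¹ ∈ K for all h ∈ H, ℓ ∈ L, and R(K) ⊆ L). Then the induced maps φ̄: G/L → Aut(H/K), with φ̄_{ḡ}(h̄) = conjugation class of φ_g(h), and R̄: H/K → G/L, R̄(h̄) = class of R(h), are well defined and make (H/K, G/L, φ̄, R̄) a relative Rota-Baxter group. -/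
/-!
The Rota-Baxter identity forces `R (h * k) = R h * R (φ (R h)⁻¹ k)`, and for `k ∈ K` the second
factor lies in `L`; so `R` is constant on cosets of `K` modulo `L`. The automorphisms `φ g`
preserve `K` and hence descend to `H ⧸ K`, and elements of `L` act trivially there. On
representatives the identity for the induced maps is the image of the identity for `(φ, R)`.
-/

def IsRelativeRotaBaxter {H G : Type*} [Group H] [Group G] (φ : G →* MulAut H) (R : H → G) :
    Prop :=
  ∀ h₁ h₂ : H, R h₁ * R h₂ = R (h₁ * φ (R h₁) h₂)

section

variable {H G : Type*} [Group H] [Group G] (φ : G →* MulAut H)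

theorem Subgroup.map_mulAut_eq_of_forall_mem {K : Subgroup H} (hK : ∀ g : G, ∀ k ∈ K, φ g k ∈ K)
    (g : G) : K.map (φ g : H →* H) = K :=
  le_antisymm (Subgroup.map_le_iff_le_comap.2 fun k hk => hK g k hk)
    fun k hk => ⟨φ g⁻¹ k, hK g⁻¹ k hk, by simp⟩

namespace IsRelativeRotaBaxter

def actionOnQuotient {K : Subgroup H} [K.Normal] (hK : ∀ g : G, ∀ k ∈ K, φ g k ∈ K) :
    G →* MulAut (H ⧸ K) where
  toFun g := QuotientGroup.congr K K (φ g) (Subgroup.map_mulAut_eq_of_forall_mem φ hK g)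
  map_one' := by
    ext x
    induction x using QuotientGroup.induction_on
    simp [QuotientGroup.congr_mk]
  map_mul' g₁ g₂ := by
    ext x
    induction x using QuotientGroup.induction_on
    simp [QuotientGroup.congr_mk]

@[simp]
theorem actionOnQuotient_mk {K : Subgroup H} [K.Normal] (hK : ∀ g : G, ∀ k ∈ K, φ g k ∈ K)
    (g : G) (h : H) : actionOnQuotient φ hK g h = (φ g h : H ⧸ K) :=
  QuotientGroup.congr_mk _ _ _ (Subgroup.map_mulAut_eq_of_forall_mem φ hK g) h

theorem le_ker_actionOnQuotient {K : Subgroup H} [K.Normal] (hK : ∀ g : G, ∀ k ∈ K, φ g k ∈ K)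
    {L : Subgroup G} (hLH : ∀ h : H, ∀ ℓ ∈ L, φ ℓ h * h⁻¹ ∈ K) :
    L ≤ (actionOnQuotient φ hK).ker := by
  intro ℓ hℓ
  refine MonoidHom.mem_ker.2 (MulEquiv.ext fun x => ?_)
  induction x using QuotientGroup.induction_on with | H h => ?_
  rw [actionOnQuotient_mk, MulAut.one_apply, QuotientGroup.eq, ← K.inv_mem_iff, mul_inv_rev,
    inv_inv]
  exact ‹K.Normal›.mem_comm (hLH h ℓ hℓ)

def quotientAction {K : Subgroup H} [K.Normal] (hK : ∀ g : G, ∀ k ∈ K, φ g k ∈ K)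
    {L : Subgroup G} [L.Normal] (hLH : ∀ h : H, ∀ ℓ ∈ L, φ ℓ h * h⁻¹ ∈ K) :
    G ⧸ L →* MulAut (H ⧸ K) :=
  QuotientGroup.lift L (actionOnQuotient φ hK) (le_ker_actionOnQuotient φ hK hLH)

@[simp]
theorem quotientAction_mk {K : Subgroup H} [K.Normal] (hK : ∀ g : G, ∀ k ∈ K, φ g k ∈ K)
    {L : Subgroup G} [L.Normal] (hLH : ∀ h : H, ∀ ℓ ∈ L, φ ℓ h * h⁻¹ ∈ K) (g : G) (h : H) :
    quotientAction φ hK hLH g h = (φ g h : H ⧸ K) := by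
  simp [quotientAction]

variable {φ} {R : H → G}

theorem mk_apply_mul_of_mem (hR : IsRelativeRotaBaxter φ R) {K : Subgroup H}
    (hK : ∀ g : G, ∀ k ∈ K, φ g k ∈ K) {L : Subgroup G} (hRK : ∀ k ∈ K, R k ∈ L)
    (h : H) {k : H} (hk : k ∈ K) : (R (h * k) : G ⧸ L) = R h := by
  have hR' : R h * R (φ (R h)⁻¹ k) = R (h * k) := by simp [hR h]
  rw [eq_comm, QuotientGroup.eq, ← hR', inv_mul_cancel_left]
  exact hRK _ (hK _ k hk)

def quotientOperator (hR : IsRelativeRotaBaxter φ R) {K : Subgroup H}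
    (hK : ∀ g : G, ∀ k ∈ K, φ g k ∈ K) (L : Subgroup G) (hRK : ∀ k ∈ K, R k ∈ L) :
    H ⧸ K → G ⧸ L :=
  Quotient.lift (fun h => (R h : G ⧸ L)) fun a b hab => by
    rw [← mul_inv_cancel_left a b]
    exact (mk_apply_mul_of_mem hR hK hRK a (QuotientGroup.leftRel_apply.1 hab)).symm

theorem quotient (hR : IsRelativeRotaBaxter φ R) {K : Subgroup H} [K.Normal]
    (hK : ∀ g : G, ∀ k ∈ K, φ g k ∈ K) {L : Subgroup G} [L.Normal]
    (hLH : ∀ h : H, ∀ ℓ ∈ L, φ ℓ h * h⁻¹ ∈ K) (hRK : ∀ k ∈ K, R k ∈ L) :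
    IsRelativeRotaBaxter (quotientAction φ hK hLH) (quotientOperator hR hK L hRK) := by
  rintro ⟨h₁⟩ ⟨h₂⟩
  exact congrArg QuotientGroup.mk (hR h₁ h₂)

end IsRelativeRotaBaxter

end

open IsRelativeRotaBaxter in
/-- If `(K, L, φ|, R|)` is an ideal of the relative Rota-Baxter group
`(H, G, φ, R)`, then there are well-defined induced maps
`φ̄ : G/L →* MulAut (H/K)` and `R̄ : H/K → G/L` (given on cosets by `φ` and `R`)
making `(H/K, G/L, φ̄, R̄)` a relative Rota-Baxter group. -/
theorem quotient_relative_RotaBaxter {H G : Type*} [Group H] [Group G]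
    (φ : G →* MulAut H) (R : H → G)
    (hR : ∀ h₁ h₂ : H, R h₁ * R h₂ = R (h₁ * φ (R h₁) h₂))
    (K : Subgroup H) (L : Subgroup G) [K.Normal] [L.Normal]
    (hβK : ∀ (g : G), ∀ k ∈ K, φ g k ∈ K)
    (hLH : ∀ (h : H), ∀ ℓ ∈ L, φ ℓ h * h⁻¹ ∈ K)
    (hRK : ∀ k ∈ K, R k ∈ L) :
    ∃ (φb : G ⧸ L →* MulAut (H ⧸ K)) (Rb : H ⧸ K → G ⧸ L),
      (∀ (g : G) (h : H),
        φb (QuotientGroup.mk g) (QuotientGroup.mk h) = QuotientGroup.mk (φ g h)) ∧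
      (∀ h : H, Rb (QuotientGroup.mk h) = QuotientGroup.mk (R h)) ∧
      (∀ x y : H ⧸ K, Rb x * Rb y = Rb (x * φb (Rb x) y)) :=
  ⟨quotientAction φ hβK hLH, quotientOperator hR hβK L hRK, quotientAction_mk φ hβK hLH,
    fun _ => rfl, IsRelativeRotaBaxter.quotient hR hβK hLH hRK⟩
end

section
/- Let A = (A, B, β, T) be a finite relative Rota-Baxter group with |A| = m and |B| = n, and let (τ₁, τ₂, ρ, χ) be a relative Rota-Baxter 2-cocycle with values in C = (ℂ^×, ℂ^×, trivial action, identity). Then for all a ∈ A and b ∈ B, ρ(a, b)^{mn} = θ₁(a) · θ₁(β_b(a))⁻¹, where θ₁(x) = (∏_{a'∈A} τ₁(x, a'))^n. -/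
/-! Multiply condition (ii) over all `a₂ ∈ A`. Since `a₂ ↦ a a₂` and `β_b` permute `A`, the
products of `ρ(a a₂, b)` and `ρ(a₂, b)` cancel, and `ρ(a, b)^m` is left equal to
`∏ τ₁(a, ·) / ∏ τ₁(β_b a, ·)`; raising this to the `n`-th power gives the theorem. -/

open Finset

theorem pow_card_eq_prod_div_prod {A M : Type*} [Group A] [Fintype A] [CommGroup M]
    (σ : MulAut A) (ρ : A → M) (τ : A → A → M)
    (h : ∀ a₁ a₂ : A, ρ (a₁ * a₂) * (ρ a₁)⁻¹ * (ρ a₂)⁻¹ * τ a₁ a₂ * (τ (σ a₁) (σ a₂))⁻¹ = 1)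
    (a : A) :
    ρ a ^ Fintype.card A = (∏ a' : A, τ a a') / ∏ a' : A, τ (σ a) a' := by
  have defect : ∀ a₂, ρ (a * a₂) / (ρ a * ρ a₂) = τ (σ a) (σ a₂) / τ a a₂ := fun a₂ => by
    rw [← mul_inv_eq_one.mp (h a a₂), mul_div_cancel_right, div_eq_mul_inv, mul_inv, mul_assoc]
  calc ρ a ^ Fintype.card A = (∏ a₂ : A, ρ (a * a₂) / (ρ a * ρ a₂))⁻¹ := by
        rw [prod_div_distrib, prod_mul_distrib, prod_const, card_univ,
          Fintype.prod_equiv (Equiv.mulLeft a) (fun x => ρ (a * x)) ρ fun _ => rfl,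
          div_mul_cancel_right, inv_inv]
    _ = (∏ a₂ : A, τ (σ a) (σ a₂) / τ a a₂)⁻¹ := by simp_rw [defect]
    _ = (∏ a' : A, τ a a') / ∏ a' : A, τ (σ a) a' := by
        rw [prod_div_distrib, inv_div,
          Fintype.prod_equiv σ.toEquiv (fun x => τ (σ a) (σ x)) (τ (σ a)) fun _ => rfl]

theorem rho_pow_mn_general {A B : Type*} [Group A] [Group B] [Fintype A] [Fintype B]
    (β : B →* MulAut A)
    (τ₁ : A → A → ℂˣ) (ρ : A → B → ℂˣ)
    (hcond2 : ∀ (a₁ a₂ : A) (b : B),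
      ρ (a₁ * a₂) b * (ρ a₁ b)⁻¹ * (ρ a₂ b)⁻¹ * τ₁ a₁ a₂ * (τ₁ (β b a₁) (β b a₂))⁻¹ = 1) :
    ∀ (a : A) (b : B),
      ρ a b ^ (Fintype.card A * Fintype.card B) =
        (∏ a' : A, τ₁ a a') ^ Fintype.card B *
          ((∏ a' : A, τ₁ (β b a) a') ^ Fintype.card B)⁻¹ := by
  intro a b
  rw [pow_mul, pow_card_eq_prod_div_prod (β b) (ρ · b) τ₁ (fun a₁ a₂ => hcond2 a₁ a₂ b),
    div_pow, div_eq_mul_inv]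

/-- Let `𝒜 = (A, B, β, T)` be a finite relative Rota-Baxter group with
`|A| = m`, `|B| = n`, and let `(τ₁, τ₂, ρ, χ)` be a relative Rota-Baxter 2-cocycle with
values in `𝒞 = (ℂˣ, ℂˣ, trivial, id)`. Then for all `a ∈ A`, `b ∈ B`,
`ρ(a,b)^{mn} = θ₁(a) θ₁(β_b a)⁻¹`, where `θ₁(x) = (∏_{a'} τ₁(x, a'))^n`. -/
theorem rho_pow_mn {A B : Type*} [Group A] [Group B] [Fintype A] [Fintype B]
    (β : B →* MulAut A) (T : A → B)
    (hT : ∀ a₁ a₂ : A, T a₁ * T a₂ = T (a₁ * β (T a₁) a₂))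
    (τ₁ : A → A → ℂˣ) (τ₂ : B → B → ℂˣ) (ρ : A → B → ℂˣ) (χ : A → ℂˣ)
    (hτ₁norm : ∀ a : A, τ₁ a 1 = 1 ∧ τ₁ 1 a = 1)
    (hτ₁ : ∀ a₁ a₂ a₃ : A,
      τ₁ a₂ a₃ * (τ₁ (a₁ * a₂) a₃)⁻¹ * τ₁ a₁ (a₂ * a₃) * (τ₁ a₁ a₂)⁻¹ = 1)
    (hτ₂norm : ∀ b : B, τ₂ b 1 = 1 ∧ τ₂ 1 b = 1)
    (hτ₂ : ∀ b₁ b₂ b₃ : B,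
      τ₂ b₂ b₃ * (τ₂ (b₁ * b₂) b₃)⁻¹ * τ₂ b₁ (b₂ * b₃) * (τ₂ b₁ b₂)⁻¹ = 1)
    (hρnorm : (∀ a : A, ρ a 1 = 1) ∧ (∀ b : B, ρ 1 b = 1)) (hχnorm : χ 1 = 1)
    (hcond1 : ∀ (a : A) (b₁ b₂ : B), ρ a (b₁ * b₂) = ρ (β b₂ a) b₁ * ρ a b₂)
    (hcond2 : ∀ (a₁ a₂ : A) (b : B),
      ρ (a₁ * a₂) b * (ρ a₁ b)⁻¹ * (ρ a₂ b)⁻¹ * τ₁ a₁ a₂ * (τ₁ (β b a₁) (β b a₂))⁻¹ = 1)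
    (hcond3 : ∀ a₁ a₂ : A,
      ρ a₂ (T a₁) * τ₁ a₁ (β (T a₁) a₂) =
        τ₂ (T a₁) (T a₂) * (χ a₂ * (χ (a₁ * β (T a₁) a₂))⁻¹ * χ a₁)) :
    ∀ (a : A) (b : B),
      ρ a b ^ (Fintype.card A * Fintype.card B) =
        (∏ a' : A, τ₁ a a') ^ Fintype.card B *
          ((∏ a' : A, τ₁ (β b a) a') ^ Fintype.card B)⁻¹ :=
  rho_pow_mn_general β τ₁ ρ hcond2
end

section
/- If A = (A, B, β, T) is a finite relative Rota-Baxter group, then the exponent of the Schur multiplier M_{RRB}(A) = H²_{RRB}(A, C) divides |A|·|B|, where C = (ℂ^×, ℂ^×, trivial action, identity map). -/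
/-!
Averaging the cocycle identities over the finite groups does all the work. For a 2-cocycle `τ` on
a finite group `G`, the cochain `a ↦ ∏ₓ τ a x` (and likewise `b ↦ ∏ᵧ τ y b`) has coboundary
`τ ^ |G|`; the twisting condition on `ρ` makes `b ↦ ∏ₓ ρ x b` multiplicative. This leads to
`θ₁ a = (∏ₓ τ₁ a x) ^ |B|` and `θ₂ b = (∏ᵧ τ₂ y b) ^ |A| * ((∏ₓ ρ x b) ^ |B|)⁻¹`.
For the `χ`-component, the cochain `b ↦ ∏ₓ τ₂ b (T x)` enters; since `T (a ∘_T x) = T a * T x`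
and `x ↦ a ∘_T x` is a bijection, its coboundary at `(y, T a)` is `τ₂ y (T a) ^ |A|`, and averaging
once more over `y` identifies its `|B|`-th power at `T a` with `(∏ᵧ τ₂ y (T a)) ^ |A|`.
-/

open Finset

section Cochains

variable {G M : Type*} [Group G] [CommGroup M]

def mulCoboundary : (G → M) →* (G → G → M) where
  toFun θ a₁ a₂ := θ a₂ * (θ (a₁ * a₂))⁻¹ * θ a₁
  map_one' := by ext; simp
  map_mul' θ θ' := by ext; simp only [Pi.mul_apply, mul_inv]; ac_rfl

@[simp]
theorem mulCoboundary_apply (θ : G → M) (a₁ a₂ : G) :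
    mulCoboundary θ a₁ a₂ = θ a₂ * (θ (a₁ * a₂))⁻¹ * θ a₁ :=
  rfl

theorem mulCoboundary_eq_one_of_map_mul {θ : G → M} (hθ : ∀ a₁ a₂, θ (a₁ * a₂) = θ a₁ * θ a₂) :
    mulCoboundary θ = 1 := by
  ext a₁ a₂
  simp [hθ, mul_comm]

variable [Fintype G]

theorem prod_mul_left_comp_of_bijective {σ : G → G} (hσ : Function.Bijective σ) (a : G)
    (f : G → M) :
    ∏ x, f (a * σ x) = ∏ x, f x :=
  ((Group.mulLeft_bijective a).comp hσ).prod_comp f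

theorem pow_card_eq_prod_pow_of_mulCoboundary {τ : G → G → M} {θ : G → M} {c : G} {k : ℕ}
    (h : ∀ y, mulCoboundary θ y c = τ y c ^ k) : θ c ^ Fintype.card G = (∏ y, τ y c) ^ k := by
  have h' := prod_congr rfl fun y (_ : y ∈ univ) => h y
  simpa only [mulCoboundary_apply, prod_mul_distrib, prod_inv_distrib, prod_const, card_univ,
    prod_pow, (Group.mulRight_bijective c).prod_comp θ, inv_mul_cancel_right] using h'

theorem pow_card_eq_prod_mul_inv_prod_comp {τ : G → G → M} {σ : G → G}
    (hσ : Function.Bijective σ) {r : G → M}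
    (hr : ∀ a₁ a₂, r (a₁ * a₂) * (r a₁)⁻¹ * (r a₂)⁻¹ * τ a₁ a₂ * (τ (σ a₁) (σ a₂))⁻¹ = 1)
    (a : G) : r a ^ Fintype.card G = (∏ x, τ a x) * (∏ x, τ (σ a) x)⁻¹ := by
  have h := prod_eq_one (s := univ) fun x _ => hr a x
  simp only [prod_mul_distrib, prod_inv_distrib, prod_const, card_univ,
    (Group.mulLeft_bijective a).prod_comp r, hσ.prod_comp (τ (σ a))] at h
  rwa [mul_inv_cancel_comm, mul_assoc, inv_mul_eq_one] at h

section Cocycle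

variable {τ : G → G → M}
  (hτ : ∀ a₁ a₂ a₃, τ a₂ a₃ * (τ (a₁ * a₂) a₃)⁻¹ * τ a₁ (a₂ * a₃) * (τ a₁ a₂)⁻¹ = 1)
include hτ

theorem mulCoboundary_prod_left : mulCoboundary (fun a => ∏ x, τ a x) = τ ^ Fintype.card G := by
  ext a₁ a₂
  have h := prod_eq_one (s := univ) fun x _ => hτ a₁ a₂ x
  simp only [prod_mul_distrib, prod_inv_distrib, prod_const, card_univ,
    (Group.mulLeft_bijective a₂).prod_comp (τ a₁)] at h
  exact mul_inv_eq_one.mp h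

theorem mulCoboundary_prod_right : mulCoboundary (fun b => ∏ y, τ y b) = τ ^ Fintype.card G := by
  ext b₁ b₂
  have h := prod_eq_one (s := univ) fun y _ => hτ y b₁ b₂
  simp only [prod_mul_distrib, prod_inv_distrib, prod_const, card_univ,
    (Group.mulRight_bijective b₁).prod_comp (τ · b₂)] at h
  rw [mulCoboundary_apply, Pi.pow_apply, Pi.pow_apply, ← mul_inv_eq_one.mp h]
  simp [mul_comm, mul_left_comm, mul_assoc]

end Cocycle

end Cochains

section RelativeRotaBaxter

variable {A B M : Type*} [Group A] [Group B] [Fintype A] [CommGroup M]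
  (β : B →* MulAut A) (T : A → B)

theorem prod_map_mul_of_twisted {ρ : A → B → M}
    (hρ : ∀ a b₁ b₂, ρ a (b₁ * b₂) = ρ (β b₂ a) b₁ * ρ a b₂) (b₁ b₂ : B) :
    ∏ x, ρ x (b₁ * b₂) = (∏ x, ρ x b₁) * ∏ x, ρ x b₂ := by
  simp only [hρ, prod_mul_distrib, (β b₂).bijective.prod_comp (ρ · b₁)]

theorem prod_mul_prod_eq_prod_comp_mul_pow_card {τ₁ : A → A → M} {τ₂ : B → B → M}
    {ρ : A → B → M} {χ : A → M}
    (h : ∀ a₁ a₂, ρ a₂ (T a₁) * τ₁ a₁ (β (T a₁) a₂) =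
      τ₂ (T a₁) (T a₂) * (χ a₂ * (χ (a₁ * β (T a₁) a₂))⁻¹ * χ a₁)) (a : A) :
    (∏ x, ρ x (T a)) * ∏ x, τ₁ a x = (∏ x, τ₂ (T a) (T x)) * χ a ^ Fintype.card A := by
  have h' := prod_congr rfl fun x (_ : x ∈ univ) => h a x
  simpa only [prod_mul_distrib, prod_inv_distrib, prod_const, card_univ,
    (β (T a)).bijective.prod_comp (τ₁ a),
    prod_mul_left_comp_of_bijective (β (T a)).bijective a χ,
    mul_inv_cancel, one_mul] using h'

variable {β T}

theorem mulCoboundary_prod_comp_apply (hT : ∀ a₁ a₂, T a₁ * T a₂ = T (a₁ * β (T a₁) a₂))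
    {τ : B → B → M}
    (hτ : ∀ b₁ b₂ b₃, τ b₂ b₃ * (τ (b₁ * b₂) b₃)⁻¹ * τ b₁ (b₂ * b₃) * (τ b₁ b₂)⁻¹ = 1)
    (y : B) (a : A) :
    mulCoboundary (fun b => ∏ x, τ b (T x)) y (T a) = τ y (T a) ^ Fintype.card A := by
  have h := prod_eq_one (s := univ) fun x _ => hτ y (T a) (T x)
  simp only [hT, prod_mul_distrib, prod_inv_distrib, prod_const, card_univ,
    prod_mul_left_comp_of_bijective (β (T a)).bijective a (fun z => τ y (T z))] at h
  rw [mulCoboundary_apply]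
  exact mul_inv_eq_one.mp h

end RelativeRotaBaxter

theorem schurMultiplier_exponent_dvd_general {A B : Type*} [Group A] [Group B] [Fintype A] [Fintype B]
    (β : B →* MulAut A) (T : A → B)
    (hT : ∀ a₁ a₂ : A, T a₁ * T a₂ = T (a₁ * β (T a₁) a₂))
    (τ₁ : A → A → ℂˣ) (τ₂ : B → B → ℂˣ) (ρ : A → B → ℂˣ) (χ : A → ℂˣ)
    (hτ₁ : ∀ a₁ a₂ a₃ : A,
      τ₁ a₂ a₃ * (τ₁ (a₁ * a₂) a₃)⁻¹ * τ₁ a₁ (a₂ * a₃) * (τ₁ a₁ a₂)⁻¹ = 1)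
    (hτ₂ : ∀ b₁ b₂ b₃ : B,
      τ₂ b₂ b₃ * (τ₂ (b₁ * b₂) b₃)⁻¹ * τ₂ b₁ (b₂ * b₃) * (τ₂ b₁ b₂)⁻¹ = 1)
    (hcond1 : ∀ (a : A) (b₁ b₂ : B), ρ a (b₁ * b₂) = ρ (β b₂ a) b₁ * ρ a b₂)
    (hcond2 : ∀ (a₁ a₂ : A) (b : B),
      ρ (a₁ * a₂) b * (ρ a₁ b)⁻¹ * (ρ a₂ b)⁻¹ * τ₁ a₁ a₂ * (τ₁ (β b a₁) (β b a₂))⁻¹ = 1)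
    (hcond3 : ∀ a₁ a₂ : A,
      ρ a₂ (T a₁) * τ₁ a₁ (β (T a₁) a₂) =
        τ₂ (T a₁) (T a₂) * (χ a₂ * (χ (a₁ * β (T a₁) a₂))⁻¹ * χ a₁)) :
    ∃ (θ₁ : A → ℂˣ) (θ₂ : B → ℂˣ),
      (∀ a₁ a₂ : A,
        τ₁ a₁ a₂ ^ (Fintype.card A * Fintype.card B) = θ₁ a₂ * (θ₁ (a₁ * a₂))⁻¹ * θ₁ a₁) ∧
      (∀ b₁ b₂ : B,
        τ₂ b₁ b₂ ^ (Fintype.card A * Fintype.card B) = θ₂ b₂ * (θ₂ (b₁ * b₂))⁻¹ * θ₂ b₁) ∧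
      (∀ (a : A) (b : B),
        ρ a b ^ (Fintype.card A * Fintype.card B) = θ₁ a * (θ₁ (β b a))⁻¹) ∧
      (∀ a : A,
        χ a ^ (Fintype.card A * Fintype.card B) = θ₁ a * (θ₂ (T a))⁻¹) := by
  have hF : mulCoboundary ((fun a => ∏ x, τ₁ a x) ^ Fintype.card B) =
      τ₁ ^ (Fintype.card A * Fintype.card B) := by
    rw [map_pow, mulCoboundary_prod_left hτ₁, pow_mul]
  have hR : mulCoboundary (fun b => ∏ x, ρ x b) = 1 :=
    mulCoboundary_eq_one_of_map_mul (prod_map_mul_of_twisted β hcond1)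
  have hG : mulCoboundary ((fun b => ∏ y, τ₂ y b) ^ Fintype.card A *
      ((fun b => ∏ x, ρ x b) ^ Fintype.card B)⁻¹) = τ₂ ^ (Fintype.card A * Fintype.card B) := by
    rw [map_mul, map_inv, map_pow, map_pow, mulCoboundary_prod_right hτ₂, hR, one_pow, inv_one,
      mul_one, ← pow_mul, mul_comm]
  refine ⟨(fun a => ∏ x, τ₁ a x) ^ Fintype.card B, (fun b => ∏ y, τ₂ y b) ^ Fintype.card A *
      ((fun b => ∏ x, ρ x b) ^ Fintype.card B)⁻¹, fun a₁ a₂ => ?_, fun b₁ b₂ => ?_,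
    fun a b => ?_, fun a => ?_⟩
  · exact (congrFun₂ hF a₁ a₂).symm
  · exact (congrFun₂ hG b₁ b₂).symm
  · rw [pow_mul, pow_card_eq_prod_mul_inv_prod_comp (r := (ρ · b)) (β b).bijective
      (hcond2 · · b) a]
    simp [mul_pow]
  · have hH := pow_card_eq_prod_pow_of_mulCoboundary (mulCoboundary_prod_comp_apply hT hτ₂ · a)
    have hχ := prod_mul_prod_eq_prod_comp_mul_pow_card β T hcond3 a
    rw [pow_mul, eq_inv_mul_of_mul_eq hχ.symm]
    simp only [Pi.mul_apply, Pi.pow_apply, Pi.inv_apply, ← hH]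
    simp [mul_pow, mul_comm, mul_left_comm]

/-- For a finite relative Rota-Baxter group `𝒜 = (A, B, β, T)`, the
exponent of the Schur multiplier `M_{RRB}(𝒜) = H²_{RRB}(𝒜, 𝒞)` divides `|A|·|B|`:
for every 2-cocycle `(τ₁, τ₂, ρ, χ)` with values in `𝒞 = (ℂˣ, ℂˣ, trivial, id)`,
its `|A||B|`-th power is a 2-coboundary. -/
theorem schurMultiplier_exponent_dvd {A B : Type*} [Group A] [Group B] [Fintype A] [Fintype B]
    (β : B →* MulAut A) (T : A → B)
    (hT : ∀ a₁ a₂ : A, T a₁ * T a₂ = T (a₁ * β (T a₁) a₂))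
    (τ₁ : A → A → ℂˣ) (τ₂ : B → B → ℂˣ) (ρ : A → B → ℂˣ) (χ : A → ℂˣ)
    (hτ₁norm : ∀ a : A, τ₁ a 1 = 1 ∧ τ₁ 1 a = 1)
    (hτ₁ : ∀ a₁ a₂ a₃ : A,
      τ₁ a₂ a₃ * (τ₁ (a₁ * a₂) a₃)⁻¹ * τ₁ a₁ (a₂ * a₃) * (τ₁ a₁ a₂)⁻¹ = 1)
    (hτ₂norm : ∀ b : B, τ₂ b 1 = 1 ∧ τ₂ 1 b = 1)
    (hτ₂ : ∀ b₁ b₂ b₃ : B,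
      τ₂ b₂ b₃ * (τ₂ (b₁ * b₂) b₃)⁻¹ * τ₂ b₁ (b₂ * b₃) * (τ₂ b₁ b₂)⁻¹ = 1)
    (hρnorm : (∀ a : A, ρ a 1 = 1) ∧ (∀ b : B, ρ 1 b = 1)) (hχnorm : χ 1 = 1)
    (hcond1 : ∀ (a : A) (b₁ b₂ : B), ρ a (b₁ * b₂) = ρ (β b₂ a) b₁ * ρ a b₂)
    (hcond2 : ∀ (a₁ a₂ : A) (b : B),
      ρ (a₁ * a₂) b * (ρ a₁ b)⁻¹ * (ρ a₂ b)⁻¹ * τ₁ a₁ a₂ * (τ₁ (β b a₁) (β b a₂))⁻¹ = 1)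
    (hcond3 : ∀ a₁ a₂ : A,
      ρ a₂ (T a₁) * τ₁ a₁ (β (T a₁) a₂) =
        τ₂ (T a₁) (T a₂) * (χ a₂ * (χ (a₁ * β (T a₁) a₂))⁻¹ * χ a₁)) :
    ∃ (θ₁ : A → ℂˣ) (θ₂ : B → ℂˣ),
      (∀ a₁ a₂ : A,
        τ₁ a₁ a₂ ^ (Fintype.card A * Fintype.card B) = θ₁ a₂ * (θ₁ (a₁ * a₂))⁻¹ * θ₁ a₁) ∧
      (∀ b₁ b₂ : B,
        τ₂ b₁ b₂ ^ (Fintype.card A * Fintype.card B) = θ₂ b₂ * (θ₂ (b₁ * b₂))⁻¹ * θ₂ b₁) ∧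
      (∀ (a : A) (b : B),
        ρ a b ^ (Fintype.card A * Fintype.card B) = θ₁ a * (θ₁ (β b a))⁻¹) ∧
      (∀ a : A,
        χ a ^ (Fintype.card A * Fintype.card B) = θ₁ a * (θ₂ (T a))⁻¹) :=
  schurMultiplier_exponent_dvd_general β T hT τ₁ τ₂ ρ χ hτ₁ hτ₂ hcond1 hcond2 hcond3
end

section
/- Let A = (A, B, β, T) be a finite relative Rota-Baxter group. Then the Schur multiplier M_{RRB}(A) = H²_{RRB}(A, C) is a finite abelian group. -/
/-!
Write `n = |A|`, `m = |B|`. Averaging a cocycle `z = (τ₁, τ₂, ρ, χ)` over the finite groups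
(`Θ a = ∏ₓ τ₁ a x`, `Φ b = ∏ᵧ τ₂ b y`) shows that `z ^ (n * m)` differs from the coboundary of a
normalized cochain by `(1, 1, 1, χ')`, where `χ'` is a character of the descendent group
`(A, ∘_T)`; hence `χ' ^ n = 1` and `z ^ (n * m * n)` is a coboundary. Extracting `n * m * n`-th
roots in `ℂˣ` gives every class a representative of exponent dividing `n * m * n`, and there are
only finitely many such cochains.
-/

section

variable {A B K L : Type*} [Group A] [Group B] [CommGroup K] [CommGroup L]

/-- A relative Rota-Baxter 2-cocycle `(τ₁, τ₂, ρ, χ)` of `(A, B, β, T)` with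
coefficients in the trivial module `(K, L, trivial, S)`. -/
def IsRRBCocycle (β : B →* MulAut A) (T : A → B) (S : K →* L)
    (τ₁ : A → A → K) (τ₂ : B → B → L) (ρ : A → B → K) (χ : A → L) : Prop :=
  (∀ a : A, τ₁ a 1 = 1 ∧ τ₁ 1 a = 1) ∧
  (∀ a₁ a₂ a₃ : A,
    τ₁ a₂ a₃ * (τ₁ (a₁ * a₂) a₃)⁻¹ * τ₁ a₁ (a₂ * a₃) * (τ₁ a₁ a₂)⁻¹ = 1) ∧
  (∀ b : B, τ₂ b 1 = 1 ∧ τ₂ 1 b = 1) ∧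
  (∀ b₁ b₂ b₃ : B,
    τ₂ b₂ b₃ * (τ₂ (b₁ * b₂) b₃)⁻¹ * τ₂ b₁ (b₂ * b₃) * (τ₂ b₁ b₂)⁻¹ = 1) ∧
  (∀ a : A, ρ a 1 = 1) ∧ (∀ b : B, ρ 1 b = 1) ∧ (χ 1 = 1) ∧
  (∀ (a : A) (b₁ b₂ : B), ρ a (b₁ * b₂) = ρ (β b₂ a) b₁ * ρ a b₂) ∧
  (∀ (a₁ a₂ : A) (b : B),
    ρ (a₁ * a₂) b * (ρ a₁ b)⁻¹ * (ρ a₂ b)⁻¹ * τ₁ a₁ a₂ * (τ₁ (β b a₁) (β b a₂))⁻¹ = 1) ∧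
  (∀ a₁ a₂ : A,
    S (ρ a₂ (T a₁) * τ₁ a₁ (β (T a₁) a₂)) =
      τ₂ (T a₁) (T a₂) * (χ a₂ * (χ (a₁ * β (T a₁) a₂))⁻¹ * χ a₁))

/-- A relative Rota-Baxter 2-coboundary. -/
def IsRRBCoboundary (β : B →* MulAut A) (T : A → B) (S : K →* L)
    (τ₁ : A → A → K) (τ₂ : B → B → L) (ρ : A → B → K) (χ : A → L) : Prop :=
  ∃ (θ₁ : A → K) (θ₂ : B → L),
    (∀ a₁ a₂ : A, τ₁ a₁ a₂ = θ₁ a₂ * (θ₁ (a₁ * a₂))⁻¹ * θ₁ a₁) ∧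
    (∀ b₁ b₂ : B, τ₂ b₁ b₂ = θ₂ b₂ * (θ₂ (b₁ * b₂))⁻¹ * θ₂ b₁) ∧
    (∀ (a : A) (b : B), ρ a b = θ₁ a * (θ₁ (β b a))⁻¹) ∧
    (∀ a : A, χ a = S (θ₁ a) * (θ₂ (T a))⁻¹)

end

set_option maxHeartbeats 1000000

section Averaging

variable {G K : Type*} [Group G] [Fintype G] [CommGroup K]

theorem pow_card_eq_of_twoCocycle {τ : G → G → K}
    (hτ : ∀ g₁ g₂ g₃ : G, τ g₂ g₃ * (τ (g₁ * g₂) g₃)⁻¹ * τ g₁ (g₂ * g₃) * (τ g₁ g₂)⁻¹ = 1)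
    (g₁ g₂ : G) :
    τ g₁ g₂ ^ Fintype.card G = (∏ x, τ g₂ x) * (∏ x, τ (g₁ * g₂) x)⁻¹ * ∏ x, τ g₁ x := by
  have hshift : ∏ x, τ g₁ (g₂ * x) = ∏ x, τ g₁ x :=
    Fintype.prod_equiv (Equiv.mulLeft g₂) _ _ fun _ => rfl
  calc τ g₁ g₂ ^ Fintype.card G
      = ∏ x, τ g₂ x * (τ (g₁ * g₂) x)⁻¹ * τ g₁ (g₂ * x) := by
        rw [← Finset.card_univ, ← Finset.prod_const]
        exact Finset.prod_congr rfl fun x _ => (mul_inv_eq_one.mp (hτ g₁ g₂ x)).symm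
    _ = _ := by rw [Finset.prod_mul_distrib, Finset.prod_mul_distrib, Finset.prod_inv_distrib,
        hshift]

theorem pow_card_eq_of_map_mul {τ : G → G → K} {r : G → K} (φ : MulAut G)
    (hr : ∀ g₁ g₂ : G, r (g₁ * g₂) * (r g₁)⁻¹ * (r g₂)⁻¹ * τ g₁ g₂ * (τ (φ g₁) (φ g₂))⁻¹ = 1)
    (g : G) :
    r g ^ Fintype.card G = (∏ x, τ g x) * (∏ x, τ (φ g) x)⁻¹ := by
  have hshift : ∏ x, r (g * x) = ∏ x, r x := Fintype.prod_equiv (Equiv.mulLeft g) _ _ fun _ => rfl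
  have htwist : ∏ x, τ (φ g) (φ x) = ∏ x, τ (φ g) x :=
    Fintype.prod_equiv φ.toEquiv _ _ fun _ => rfl
  calc r g ^ Fintype.card G
      = ∏ x, r (g * x) * (r x)⁻¹ * τ g x * (τ (φ g) (φ x))⁻¹ := by
        rw [← Finset.card_univ, ← Finset.prod_const]
        refine Finset.prod_congr rfl fun x _ => ?_
        rw [eq_comm, ← mul_inv_eq_one, ← hr g x]
        simp only [mul_comm, mul_left_comm, mul_assoc]
    _ = _ := by
      simp only [Finset.prod_mul_distrib, Finset.prod_inv_distrib, hshift, htwist,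
        mul_inv_cancel, one_mul]

end Averaging

theorem pow_card_eq_one_of_perm {G K : Type*} [Fintype G] [CommGroup K] (e : Equiv.Perm G)
    {D : G → K} {c : K} (h : ∀ x, D (e x) = c * D x) : c ^ Fintype.card G = 1 := by
  have := Fintype.prod_equiv e (fun x => D (e x)) D fun _ => rfl
  rwa [Finset.prod_congr rfl fun x _ => h x, Finset.prod_mul_distrib, Finset.prod_const,
    Finset.card_univ, mul_eq_right] at this

section Torsion

variable {N : ℕ}

theorem Set.Finite.setOf_pow_eq_one_prod {M M' : Type*} [Monoid M] [Monoid M']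
    (h : {a : M | a ^ N = 1}.Finite) (h' : {b : M' | b ^ N = 1}.Finite) :
    {p : M × M' | p ^ N = 1}.Finite :=
  (h.prod h').subset fun _ hp => ⟨congrArg Prod.fst hp, congrArg Prod.snd hp⟩

theorem Set.Finite.setOf_pow_eq_one_pi {ι : Type*} [Finite ι] {M : ι → Type*}
    [∀ i, Monoid (M i)] (h : ∀ i, {a : M i | a ^ N = 1}.Finite) :
    {f : ∀ i, M i | f ^ N = 1}.Finite :=
  (Set.Finite.pi h).subset fun _ hf i _ => congrFun hf i

theorem Units.finite_setOf_pow_eq_one {R : Type*} [CommRing R] [IsDomain R] (hN : N ≠ 0) :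
    {u : Rˣ | u ^ N = 1}.Finite := by
  have : NeZero N := ⟨hN⟩
  exact Set.finite_coe_iff.mp (inferInstanceAs (Finite (rootsOfUnity N R)))

theorem IsAlgClosed.exists_normalized_root (k : Type*) [Field k] [IsAlgClosed k] (hN : N ≠ 0) :
    ∃ σ : kˣ → kˣ, σ 1 = 1 ∧ ∀ u, σ u ^ N = u := by
  have hroot (u : kˣ) : ∃ r : kˣ, r ^ N = u := by
    obtain ⟨c, hc⟩ := IsAlgClosed.exists_pow_nat_eq (u : k) (Nat.pos_of_ne_zero hN)
    have hc0 : c ≠ 0 := by rintro rfl; exact u.ne_zero (by simpa [hN] using hc.symm)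
    exact ⟨Units.mk0 c hc0, Units.ext (by simpa using hc)⟩
  choose σ hσ using hroot
  classical
  refine ⟨fun u => if u = 1 then 1 else σ u, by simp, fun u => ?_⟩
  dsimp only
  split_ifs with hu <;> simp [hu, hσ]

end Torsion

namespace Subgroup

variable {G : Type*} [CommGroup G]

theorem finite_quotient_subgroupOf_of_pow_eq_one {Z C : Subgroup G} {N : ℕ}
    (hfin : {w : G | w ^ N = 1}.Finite) (hrep : ∀ z ∈ Z, ∃ w ∈ Z, w ^ N = 1 ∧ z * w⁻¹ ∈ C) :
    Finite (Z ⧸ C.subgroupOf Z) := by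
  have : Finite ((↑) ⁻¹' {w : G | w ^ N = 1} : Set Z) :=
    (hfin.preimage Subtype.val_injective.injOn).to_subtype
  refine Finite.of_surjective (fun w : ((↑) ⁻¹' {w : G | w ^ N = 1} : Set Z) =>
    (w.1 : Z ⧸ C.subgroupOf Z)) ?_
  rintro ⟨z, hz⟩
  obtain ⟨w, hwZ, hwN, hzw⟩ := hrep z hz
  refine ⟨⟨⟨w, hwZ⟩, hwN⟩, QuotientGroup.eq.mpr ?_⟩
  rwa [mem_subgroupOf, coe_mul, coe_inv, mul_comm]

theorem exists_finite_commGroup_classMap (Z C : Subgroup G) [Finite (Z ⧸ C.subgroupOf Z)] :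
    ∃ (Q : Type) (_ : CommGroup Q) (_ : Finite Q) (f : G → Q),
      (∀ z w, z ∈ Z → w ∈ Z → f (z * w) = f z * f w) ∧ (∀ q, ∃ z, z ∈ Z ∧ f z = q) ∧
      (∀ z w, z ∈ Z → w ∈ Z → (f z = f w ↔ z * w⁻¹ ∈ C)) := by
  classical
  let e : Shrink.{0} (Z ⧸ C.subgroupOf Z) ≃* Z ⧸ C.subgroupOf Z := Shrink.mulEquiv
  let f : G → Shrink.{0} (Z ⧸ C.subgroupOf Z) := fun g =>
    if hg : g ∈ Z then e.symm (QuotientGroup.mk ⟨g, hg⟩) else 1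
  have hf : ∀ z (hz : z ∈ Z), f z = e.symm (QuotientGroup.mk ⟨z, hz⟩) := fun z hz => dif_pos hz
  refine ⟨_, inferInstance, .of_equiv _ e.toEquiv.symm, f, fun z w hz hw => ?_, fun q => ?_,
    fun z w hz hw => ?_⟩
  · rw [hf z hz, hf w hw, hf _ (mul_mem hz hw), ← map_mul]
    rfl
  · obtain ⟨⟨z, hz⟩, hq⟩ := QuotientGroup.mk_surjective (e q)
    exact ⟨z, hz, by rw [hf z hz, hq, MulEquiv.symm_apply_apply]⟩
  · rw [hf z hz, hf w hw, e.symm.injective.eq_iff, QuotientGroup.eq, mem_subgroupOf, coe_mul,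
      coe_inv, ← inv_mem_iff, mul_inv_rev, inv_inv, mul_comm]

end Subgroup

namespace RRBCohomology

abbrev Cochains (A B K L : Type*) := (A → A → K) × (B → B → L) × (A → B → K) × (A → L)

theorem finite_setOf_pow_eq_one_cochains {A B R : Type*} [Finite A] [Finite B] [CommRing R]
    [IsDomain R] {N : ℕ} (hN : N ≠ 0) : {w : Cochains A B Rˣ Rˣ | w ^ N = 1}.Finite :=
  have h := Units.finite_setOf_pow_eq_one (R := R) hN
  .setOf_pow_eq_one_prod (.setOf_pow_eq_one_pi fun _ => .setOf_pow_eq_one_pi fun _ => h) <|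
    .setOf_pow_eq_one_prod (.setOf_pow_eq_one_pi fun _ => .setOf_pow_eq_one_pi fun _ => h) <|
      .setOf_pow_eq_one_prod (.setOf_pow_eq_one_pi fun _ => .setOf_pow_eq_one_pi fun _ => h)
        (.setOf_pow_eq_one_pi fun _ => h)

variable {A B : Type*} [Group A] [Group B] (β : B →* MulAut A) (T : A → B)

theorem map_one_of_rotaBaxter (hT : ∀ a₁ a₂ : A, T a₁ * T a₂ = T (a₁ * β (T a₁) a₂)) :
    T 1 = 1 := by
  simpa using hT 1 1

section Coefficients

variable {K L : Type*} [CommGroup K] [CommGroup L] (S : K →* L)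

def cocycles : Subgroup (Cochains A B K L) :=
  Subgroup.ofDiv {z | IsRRBCocycle β T S z.1 z.2.1 z.2.2.1 z.2.2.2}
    ⟨1, by refine ⟨?_, ?_, ?_, ?_, ?_, ?_, ?_, ?_, ?_, ?_⟩ <;> simp⟩
    (by
      rintro z ⟨z1, z2, z3, z4, z5, z6, z7, z8, z9, z10⟩
        w ⟨w1, w2, w3, w4, w5, w6, w7, w8, w9, w10⟩
      refine ⟨fun a => ⟨?_, ?_⟩, fun a₁ a₂ a₃ => ?_, fun b => ⟨?_, ?_⟩, fun b₁ b₂ b₃ => ?_,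
        fun a => ?_, fun b => ?_, ?_, fun a b₁ b₂ => ?_, fun a₁ a₂ b => ?_, fun a₁ a₂ => ?_⟩
      · simp [(z1 a).1, (w1 a).1]
      · simp [(z1 a).2, (w1 a).2]
      · simpa [div_eq_mul_inv, mul_inv, mul_comm, mul_left_comm, mul_assoc] using
          congrArg₂ (· / ·) (z2 a₁ a₂ a₃) (w2 a₁ a₂ a₃)
      · simp [(z3 b).1, (w3 b).1]
      · simp [(z3 b).2, (w3 b).2]
      · simpa [div_eq_mul_inv, mul_inv, mul_comm, mul_left_comm, mul_assoc] using
          congrArg₂ (· / ·) (z4 b₁ b₂ b₃) (w4 b₁ b₂ b₃)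
      · simp [z5 a, w5 a]
      · simp [z6 b, w6 b]
      · simp [z7, w7]
      · simpa [div_eq_mul_inv, mul_inv, mul_comm, mul_left_comm, mul_assoc] using
          congrArg₂ (· / ·) (z8 a b₁ b₂) (w8 a b₁ b₂)
      · simpa [div_eq_mul_inv, mul_inv, mul_comm, mul_left_comm, mul_assoc] using
          congrArg₂ (· / ·) (z9 a₁ a₂ b) (w9 a₁ a₂ b)
      · simpa [div_eq_mul_inv, mul_inv, mul_comm, mul_left_comm, mul_assoc] using
          congrArg₂ (· / ·) (z10 a₁ a₂) (w10 a₁ a₂))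

def coboundaryHom : (A → K) × (B → L) →* Cochains A B K L :=
  MonoidHom.mk' (fun θ => (fun a₁ a₂ => θ.1 a₂ * (θ.1 (a₁ * a₂))⁻¹ * θ.1 a₁,
      fun b₁ b₂ => θ.2 b₂ * (θ.2 (b₁ * b₂))⁻¹ * θ.2 b₁,
      fun a b => θ.1 a * (θ.1 (β b a))⁻¹,
      fun a => S (θ.1 a) * (θ.2 (T a))⁻¹))
    (fun θ η => by
      refine Prod.ext ?_ (Prod.ext ?_ (Prod.ext ?_ ?_)) <;> funext <;>
        simp [mul_comm, mul_left_comm, mul_assoc])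

theorem isRRBCoboundary_iff_mem_range (z : Cochains A B K L) :
    IsRRBCoboundary β T S z.1 z.2.1 z.2.2.1 z.2.2.2 ↔ z ∈ (coboundaryHom β T S).range := by
  constructor
  · rintro ⟨θ₁, θ₂, h₁, h₂, h₃, h₄⟩
    exact ⟨(θ₁, θ₂), Prod.ext (funext₂ fun _ _ => (h₁ _ _).symm) (Prod.ext
      (funext₂ fun _ _ => (h₂ _ _).symm) (Prod.ext (funext₂ fun _ _ => (h₃ _ _).symm)
      (funext fun _ => (h₄ _).symm)))⟩
  · rintro ⟨θ, rfl⟩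
    exact ⟨θ.1, θ.2, fun _ _ => rfl, fun _ _ => rfl, fun _ _ => rfl, fun _ => rfl⟩

theorem coboundaryHom_mem_cocycles (hT : ∀ a₁ a₂ : A, T a₁ * T a₂ = T (a₁ * β (T a₁) a₂))
    {θ : (A → K) × (B → L)} (h₁ : θ.1 1 = 1) (h₂ : θ.2 1 = 1) :
    coboundaryHom β T S θ ∈ cocycles β T S := by
  refine ⟨fun a => ⟨?_, ?_⟩, fun a₁ a₂ a₃ => ?_, fun b => ⟨?_, ?_⟩, fun b₁ b₂ b₃ => ?_,
    fun a => ?_, fun b => ?_, ?_, fun a b₁ b₂ => ?_, fun a₁ a₂ b => ?_, fun a₁ a₂ => ?_⟩ <;>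
    simp [coboundaryHom, h₁, h₂, map_one_of_rotaBaxter β T hT, ← hT, mul_assoc, mul_comm,
      mul_left_comm]

-- `a₁ * β (T a₁) a₂` is the descendent product `a₁ ∘_T a₂`.
theorem map_mul_of_trivial_mem_cocycles {χ : A → L}
    (h : ((1, 1, 1, χ) : Cochains A B K L) ∈ cocycles β T S) (a₁ a₂ : A) :
    χ (a₁ * β (T a₁) a₂) = χ a₁ * χ a₂ := by
  have := h.2.2.2.2.2.2.2.2.2 a₁ a₂
  simp only [Pi.one_apply, mul_one, map_one, one_mul] at this
  rw [eq_comm, mul_right_comm, mul_inv_eq_one] at this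
  rw [← this, mul_comm]

theorem pow_card_eq_one_of_trivial_mem_cocycles [Fintype A] {χ : A → L}
    (h : ((1, 1, 1, χ) : Cochains A B K L) ∈ cocycles β T S) :
    ((1, 1, 1, χ) : Cochains A B K L) ^ Fintype.card A = 1 := by
  refine Prod.ext (one_pow _) (Prod.ext (one_pow _) (Prod.ext (one_pow _) (funext fun a => ?_)))
  exact pow_card_eq_one_of_perm ((β (T a)).toEquiv.trans (Equiv.mulLeft a))
    (map_mul_of_trivial_mem_cocycles β T S h a)

variable [Fintype A] [Fintype B]

def averagedCochain (z : Cochains A B K L) : (A → K) × (B → L) :=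
  (fun a => (∏ x, z.1 a x) ^ Fintype.card B, fun b => (∏ y, z.2.1 b y) ^ Fintype.card A)

theorem exists_pow_div_coboundaryHom_eq {z : Cochains A B K L} (hz : z ∈ cocycles β T S) :
    ∃ χ : A → L, z ^ (Fintype.card A * Fintype.card B) /
      coboundaryHom β T S (averagedCochain z) = (1, 1, 1, χ) := by
  refine ⟨_, Prod.ext (funext₂ fun a₁ a₂ => ?_)
    (Prod.ext (funext₂ fun b₁ b₂ => ?_) (Prod.ext (funext₂ fun a b => ?_) rfl))⟩ <;>
    simp only [Prod.fst_div, Prod.snd_div, Prod.pow_fst, Prod.pow_snd, Pi.div_apply,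
      Pi.pow_apply, Pi.one_apply, div_eq_one]
  · rw [pow_mul, pow_card_eq_of_twoCocycle hz.2.1]
    simp [coboundaryHom, averagedCochain, mul_pow]
  · rw [mul_comm, pow_mul, pow_card_eq_of_twoCocycle hz.2.2.2.1]
    simp [coboundaryHom, averagedCochain, mul_pow]
  · rw [pow_mul, pow_card_eq_of_map_mul (r := (z.2.2.1 · b)) (β b)
      fun g₁ g₂ => hz.2.2.2.2.2.2.2.2.1 g₁ g₂ b]
    simp [coboundaryHom, averagedCochain, mul_pow]

theorem averagedCochain_fst_one {z : Cochains A B K L} (hz : z ∈ cocycles β T S) :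
    (averagedCochain z).1 1 = 1 := by
  simp [averagedCochain, fun x => (hz.1 x).2]

theorem averagedCochain_snd_one {z : Cochains A B K L} (hz : z ∈ cocycles β T S) :
    (averagedCochain z).2 1 = 1 := by
  simp [averagedCochain, fun y => (hz.2.2.1 y).2]

theorem pow_eq_coboundaryHom (hT : ∀ a₁ a₂ : A, T a₁ * T a₂ = T (a₁ * β (T a₁) a₂))
    {z : Cochains A B K L} (hz : z ∈ cocycles β T S) :
    z ^ (Fintype.card A * Fintype.card B * Fintype.card A) =
      coboundaryHom β T S (averagedCochain z ^ Fintype.card A) := by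
  set θ := averagedCochain z
  obtain ⟨χ, hχ⟩ := exists_pow_div_coboundaryHom_eq β T S hz
  have hθ : coboundaryHom β T S θ ∈ cocycles β T S := coboundaryHom_mem_cocycles β T S hT
    (averagedCochain_fst_one β T S hz) (averagedCochain_snd_one β T S hz)
  have hχmem : ((1, 1, 1, χ) : Cochains A B K L) ∈ cocycles β T S :=
    hχ ▸ div_mem (pow_mem hz _) hθ
  calc z ^ (Fintype.card A * Fintype.card B * Fintype.card A)
      = (z ^ (Fintype.card A * Fintype.card B) / coboundaryHom β T S θ) ^ Fintype.card A *
          coboundaryHom β T S θ ^ Fintype.card A := by rw [← mul_pow, div_mul_cancel, pow_mul]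
    _ = coboundaryHom β T S (θ ^ Fintype.card A) := by
      rw [hχ, pow_card_eq_one_of_trivial_mem_cocycles β T S hχmem, one_mul, map_pow]

end Coefficients

variable [Fintype A] [Fintype B]

theorem exists_pow_eq_one_mem_cocycles {k : Type*} [Field k] [IsAlgClosed k] (S : kˣ →* kˣ)
    (hT : ∀ a₁ a₂ : A, T a₁ * T a₂ = T (a₁ * β (T a₁) a₂))
    {z : Cochains A B kˣ kˣ} (hz : z ∈ cocycles β T S) :
    ∃ w ∈ cocycles β T S, w ^ (Fintype.card A * Fintype.card B * Fintype.card A) = 1 ∧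
      z * w⁻¹ ∈ (coboundaryHom β T S).range := by
  obtain ⟨σ, hσ1, hσ⟩ := IsAlgClosed.exists_normalized_root k
    (N := Fintype.card A * Fintype.card B * Fintype.card A) (by positivity)
  set Ψ := averagedCochain z ^ Fintype.card A
  set θ : (A → kˣ) × (B → kˣ) := (σ ∘ Ψ.1, σ ∘ Ψ.2)
  have hθN : θ ^ (Fintype.card A * Fintype.card B * Fintype.card A) = Ψ :=
    Prod.ext (funext fun _ => hσ _) (funext fun _ => hσ _)
  have hθ : coboundaryHom β T S θ ∈ cocycles β T S := coboundaryHom_mem_cocycles β T S hT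
    (by simp [θ, Ψ, averagedCochain_fst_one β T S hz, hσ1])
    (by simp [θ, Ψ, averagedCochain_snd_one β T S hz, hσ1])
  refine ⟨z * (coboundaryHom β T S θ)⁻¹, mul_mem hz (inv_mem hθ), ?_, θ,
    by rw [mul_inv_rev, inv_inv, mul_comm, inv_mul_cancel_right]⟩
  rw [mul_pow, inv_pow, pow_eq_coboundaryHom β T S hT hz, ← map_pow, hθN, mul_inv_cancel]

end RRBCohomology

/-- For a finite relative Rota-Baxter group `𝒜 = (A, B, β, T)`, the Schur
multiplier `M_{RRB}(𝒜) = H²_{RRB}(𝒜, 𝒞)` (cocycles modulo coboundaries with values in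
`𝒞 = (ℂˣ, ℂˣ, trivial, id)`) is a finite abelian group: there is a finite abelian group
`Q` and a class map from cocycles onto `Q` which is multiplicative and identifies exactly
the cohomologous cocycles. -/
theorem schurMultiplier_finite_abelian {A B : Type*} [Group A] [Group B]
    [Fintype A] [Fintype B] (β : B →* MulAut A) (T : A → B)
    (hT : ∀ a₁ a₂ : A, T a₁ * T a₂ = T (a₁ * β (T a₁) a₂)) :
    ∃ (Q : Type) (_ : CommGroup Q) (_ : Finite Q)
      (f : ((A → A → ℂˣ) × (B → B → ℂˣ) × (A → B → ℂˣ) × (A → ℂˣ)) → Q),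
      (∀ z w, IsRRBCocycle β T (MonoidHom.id ℂˣ) z.1 z.2.1 z.2.2.1 z.2.2.2 →
          IsRRBCocycle β T (MonoidHom.id ℂˣ) w.1 w.2.1 w.2.2.1 w.2.2.2 →
          f (z * w) = f z * f w) ∧
      (∀ q : Q, ∃ z, IsRRBCocycle β T (MonoidHom.id ℂˣ) z.1 z.2.1 z.2.2.1 z.2.2.2 ∧
          f z = q) ∧
      (∀ z w, IsRRBCocycle β T (MonoidHom.id ℂˣ) z.1 z.2.1 z.2.2.1 z.2.2.2 →
          IsRRBCocycle β T (MonoidHom.id ℂˣ) w.1 w.2.1 w.2.2.1 w.2.2.2 →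
          (f z = f w ↔
            IsRRBCoboundary β T (MonoidHom.id ℂˣ) (z * w⁻¹).1 (z * w⁻¹).2.1
              (z * w⁻¹).2.2.1 (z * w⁻¹).2.2.2)) := by
  let Z := RRBCohomology.cocycles β T (MonoidHom.id ℂˣ)
  let C := (RRBCohomology.coboundaryHom β T (MonoidHom.id ℂˣ)).range
  have : Finite (Z ⧸ C.subgroupOf Z) :=
    Subgroup.finite_quotient_subgroupOf_of_pow_eq_one
      (RRBCohomology.finite_setOf_pow_eq_one_cochains (by positivity))
      fun _ hz => RRBCohomology.exists_pow_eq_one_mem_cocycles β T _ hT hz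
  obtain ⟨Q, instQ, hQ, f, hmul, hsurj, hker⟩ := Subgroup.exists_finite_commGroup_classMap Z C
  exact ⟨Q, instQ, hQ, f, hmul, hsurj, fun z w hz hw =>
    (hker z w hz hw).trans (RRBCohomology.isRRBCoboundary_iff_mem_range β T _ _).symm⟩
end

section
/- Every element of M_{RRB}(A) of order dividing n has a representative 2-cocycle (τ₁, τ₂, ρ, χ) whose values all lie in the group G_n = {z ∈ ℂ^× : zⁿ = 1} of n-th roots of unity. -/
theorem IsAlgClosed.exists_units_pow_eq {K : Type*} [Field K] [IsAlgClosed K] {n : ℕ}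
    (hn : 0 < n) (z : Kˣ) : ∃ w : Kˣ, w ^ n = z := by
  obtain ⟨w, hw⟩ := IsAlgClosed.exists_pow_nat_eq (z : K) hn
  have hw₀ : w ≠ 0 := by
    rintro rfl
    exact z.ne_zero (by rw [← hw, zero_pow hn.ne'])
  exact ⟨Units.mk0 w hw₀, Units.ext hw⟩

theorem mul_pow_eq_one_of_pow_eq_inv_pow {G : Type*} [CommGroup G] {x y : G} {n : ℕ}
    (h : y ^ n = (x ^ n)⁻¹) : (x * y) ^ n = 1 := by
  rw [mul_pow, h, mul_inv_cancel]

theorem representative_in_roots_of_unity_general {A B : Type*} [Group A] [Group B]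
    (β : B →* MulAut A) (T : A → B)
    (τ₁ : A → A → ℂˣ) (τ₂ : B → B → ℂˣ) (ρ : A → B → ℂˣ) (χ : A → ℂˣ)
    (n : ℕ) (hn : 0 < n)
    (horder : ∃ (k₁ : A → ℂˣ) (k₂ : B → ℂˣ),
      (∀ a₁ a₂ : A, τ₁ a₁ a₂ ^ n = k₁ a₂ * (k₁ (a₁ * a₂))⁻¹ * k₁ a₁) ∧
      (∀ b₁ b₂ : B, τ₂ b₁ b₂ ^ n = k₂ b₂ * (k₂ (b₁ * b₂))⁻¹ * k₂ b₁) ∧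
      (∀ (a : A) (b : B), ρ a b ^ n = k₁ a * (k₁ (β b a))⁻¹) ∧
      (∀ a : A, χ a ^ n = k₁ a * (k₂ (T a))⁻¹)) :
    ∃ (θ₁ : A → ℂˣ) (θ₂ : B → ℂˣ),
      (∀ a₁ a₂ : A, (τ₁ a₁ a₂ * (θ₁ a₂ * (θ₁ (a₁ * a₂))⁻¹ * θ₁ a₁)) ^ n = 1) ∧
      (∀ b₁ b₂ : B, (τ₂ b₁ b₂ * (θ₂ b₂ * (θ₂ (b₁ * b₂))⁻¹ * θ₂ b₁)) ^ n = 1) ∧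
      (∀ (a : A) (b : B), (ρ a b * (θ₁ a * (θ₁ (β b a))⁻¹)) ^ n = 1) ∧
      (∀ a : A, (χ a * (θ₁ a * (θ₂ (T a))⁻¹)) ^ n = 1) := by
  obtain ⟨k₁, k₂, hτ₁, hτ₂, hρ, hχ⟩ := horder
  -- ℂˣ is divisible: n-th roots of k⁻¹ give a coboundary whose n-th power cancels the cocycle's
  choose θ₁ hθ₁ using fun a => IsAlgClosed.exists_units_pow_eq hn (k₁ a)⁻¹
  choose θ₂ hθ₂ using fun b => IsAlgClosed.exists_units_pow_eq hn (k₂ b)⁻¹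
  refine ⟨θ₁, θ₂, fun a₁ a₂ => ?_, fun b₁ b₂ => ?_, fun a b => ?_, fun a => ?_⟩ <;>
    refine mul_pow_eq_one_of_pow_eq_inv_pow ?_ <;>
    simp only [hτ₁, hτ₂, hρ, hχ, mul_pow, inv_pow, hθ₁, hθ₂, mul_inv]

/-- Every element of `M_{RRB}(𝒜)` of order dividing `n` has a representative
2-cocycle whose values lie in `Gₙ = {z ∈ ℂˣ : zⁿ = 1}`: if the `n`-th power of the cocycle
`(τ₁, τ₂, ρ, χ)` is a coboundary, then there are `θ₁ : A → ℂˣ`, `θ₂ : B → ℂˣ` such that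
the cohomologous cocycle obtained by multiplying with the coboundary of `(θ₁, θ₂)`
takes values in the `n`-th roots of unity. -/
theorem representative_in_roots_of_unity {A B : Type*} [Group A] [Group B]
    (β : B →* MulAut A) (T : A → B)
    (hT : ∀ a₁ a₂ : A, T a₁ * T a₂ = T (a₁ * β (T a₁) a₂))
    (τ₁ : A → A → ℂˣ) (τ₂ : B → B → ℂˣ) (ρ : A → B → ℂˣ) (χ : A → ℂˣ)
    (hτ₁norm : ∀ a : A, τ₁ a 1 = 1 ∧ τ₁ 1 a = 1)
    (hτ₁ : ∀ a₁ a₂ a₃ : A,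
      τ₁ a₂ a₃ * (τ₁ (a₁ * a₂) a₃)⁻¹ * τ₁ a₁ (a₂ * a₃) * (τ₁ a₁ a₂)⁻¹ = 1)
    (hτ₂norm : ∀ b : B, τ₂ b 1 = 1 ∧ τ₂ 1 b = 1)
    (hτ₂ : ∀ b₁ b₂ b₃ : B,
      τ₂ b₂ b₃ * (τ₂ (b₁ * b₂) b₃)⁻¹ * τ₂ b₁ (b₂ * b₃) * (τ₂ b₁ b₂)⁻¹ = 1)
    (hρnorm : (∀ a : A, ρ a 1 = 1) ∧ (∀ b : B, ρ 1 b = 1)) (hχnorm : χ 1 = 1)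
    (hcond1 : ∀ (a : A) (b₁ b₂ : B), ρ a (b₁ * b₂) = ρ (β b₂ a) b₁ * ρ a b₂)
    (hcond2 : ∀ (a₁ a₂ : A) (b : B),
      ρ (a₁ * a₂) b * (ρ a₁ b)⁻¹ * (ρ a₂ b)⁻¹ * τ₁ a₁ a₂ * (τ₁ (β b a₁) (β b a₂))⁻¹ = 1)
    (hcond3 : ∀ a₁ a₂ : A,
      ρ a₂ (T a₁) * τ₁ a₁ (β (T a₁) a₂) =
        τ₂ (T a₁) (T a₂) * (χ a₂ * (χ (a₁ * β (T a₁) a₂))⁻¹ * χ a₁))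
    (n : ℕ) (hn : 0 < n)
    (horder : ∃ (k₁ : A → ℂˣ) (k₂ : B → ℂˣ),
      (∀ a₁ a₂ : A, τ₁ a₁ a₂ ^ n = k₁ a₂ * (k₁ (a₁ * a₂))⁻¹ * k₁ a₁) ∧
      (∀ b₁ b₂ : B, τ₂ b₁ b₂ ^ n = k₂ b₂ * (k₂ (b₁ * b₂))⁻¹ * k₂ b₁) ∧
      (∀ (a : A) (b : B), ρ a b ^ n = k₁ a * (k₁ (β b a))⁻¹) ∧
      (∀ a : A, χ a ^ n = k₁ a * (k₂ (T a))⁻¹)) :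
    ∃ (θ₁ : A → ℂˣ) (θ₂ : B → ℂˣ),
      (∀ a₁ a₂ : A, (τ₁ a₁ a₂ * (θ₁ a₂ * (θ₁ (a₁ * a₂))⁻¹ * θ₁ a₁)) ^ n = 1) ∧
      (∀ b₁ b₂ : B, (τ₂ b₁ b₂ * (θ₂ b₂ * (θ₂ (b₁ * b₂))⁻¹ * θ₂ b₁)) ^ n = 1) ∧
      (∀ (a : A) (b : B), (ρ a b * (θ₁ a * (θ₁ (β b a))⁻¹)) ^ n = 1) ∧
      (∀ a : A, (χ a * (θ₁ a * (θ₂ (T a))⁻¹)) ^ n = 1) :=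
  representative_in_roots_of_unity_general β T τ₁ τ₂ ρ χ n hn horder
end

section
/- Let A = (A, B, β, T) be a relative Rota-Baxter group and (K, L, α, S) a relative Rota-Baxter subgroup of A with S: K → L surjective, such that K is contained in A^β (the subgroup of A generated by the commutator subgroup A' and all elements β_b(a)a⁻¹) and L ⊆ B. Then for every homomorphism (ψ, η): A → C = (ℂ^×, ℂ^×, trivial, id) of relative Rota-Baxter groups, the restrictions ψ|_K and η|_L are trivial. -/
theorem Subgroup.closure_commutators_union_displacements_le_ker {A B G : Type*}
    [Group A] [Monoid B] [CommGroup G] (β : B →* MulAut A) (ψ : A →* G)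
    (hψ : ∀ (b : B) (a : A), ψ (β b a) = ψ a) :
    Subgroup.closure ({x : A | ∃ a b : A, x = a * b * a⁻¹ * b⁻¹} ∪
      {x : A | ∃ (a : A) (b : B), x = β b a * a⁻¹}) ≤ ψ.ker := by
  rw [Subgroup.closure_le]
  rintro x (⟨a, b, rfl⟩ | ⟨a, b, rfl⟩)
  · simp [MonoidHom.mem_ker]
  · simp [MonoidHom.mem_ker, hψ]

theorem restriction_trivial_of_subset_commutator_general {A B : Type*} [Group A] [Group B]
    (β : B →* MulAut A) (T : A → B)
    (K : Subgroup A) (L : Subgroup B)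
    (hSsurj : ∀ ℓ ∈ L, ∃ k ∈ K, T k = ℓ)
    (hKsub : (K : Set A) ⊆
      (Subgroup.closure ({x : A | ∃ a b : A, x = a * b * a⁻¹ * b⁻¹} ∪
        {x : A | ∃ (a : A) (b : B), x = β b a * a⁻¹}) : Subgroup A))
    (ψ : A →* ℂˣ) (η : B →* ℂˣ)
    (hcomm₁ : ∀ a : A, η (T a) = ψ a)
    (hcomm₂ : ∀ (b : B) (a : A), ψ (β b a) = ψ a) :
    (∀ k ∈ K, ψ k = 1) ∧ (∀ ℓ ∈ L, η ℓ = 1) := by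
  have hψK : ∀ k ∈ K, ψ k = 1 := fun k hk => MonoidHom.mem_ker.mp <|
    Subgroup.closure_commutators_union_displacements_le_ker β ψ hcomm₂ (hKsub hk)
  refine ⟨hψK, fun ℓ hℓ => ?_⟩
  obtain ⟨k, hk, rfl⟩ := hSsurj ℓ hℓ
  rw [hcomm₁, hψK k hk]

/-- Let `𝒜 = (A, B, β, T)` be a relative Rota-Baxter group and
`(K, L, β|, T|)` a relative Rota-Baxter subgroup with `T| : K → L` surjective, such that
`K ⊆ A^β`, the subgroup generated by the commutator subgroup of `A` together with all
elements `β_b(a) a⁻¹`. Then every homomorphism `(ψ, η) : 𝒜 → 𝒞 = (ℂˣ, ℂˣ, trivial, id)`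
restricts to the trivial homomorphism on `(K, L)`. -/
theorem restriction_trivial_of_subset_commutator {A B : Type*} [Group A] [Group B]
    (β : B →* MulAut A) (T : A → B)
    (hT : ∀ a₁ a₂ : A, T a₁ * T a₂ = T (a₁ * β (T a₁) a₂))
    (K : Subgroup A) (L : Subgroup B)
    (hβKL : ∀ ℓ ∈ L, ∀ k ∈ K, β ℓ k ∈ K)
    (hTKL : ∀ k ∈ K, T k ∈ L)
    (hSsurj : ∀ ℓ ∈ L, ∃ k ∈ K, T k = ℓ)
    (hKsub : (K : Set A) ⊆
      (Subgroup.closure ({x : A | ∃ a b : A, x = a * b * a⁻¹ * b⁻¹} ∪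
        {x : A | ∃ (a : A) (b : B), x = β b a * a⁻¹}) : Subgroup A))
    (ψ : A →* ℂˣ) (η : B →* ℂˣ)
    (hcomm₁ : ∀ a : A, η (T a) = ψ a)
    (hcomm₂ : ∀ (b : B) (a : A), ψ (β b a) = ψ a) :
    (∀ k ∈ K, ψ k = 1) ∧ (∀ ℓ ∈ L, η ℓ = 1) :=
  restriction_trivial_of_subset_commutator_general β T K L hSsurj hKsub ψ η hcomm₁ hcomm₂
end
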